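/- Let δ, η > 0, μ ∈ ℝ with μ + α/η + 1 > 0, α > 0, ξ > 0, and let f : [0,ξ] → ℝ be continuous with |f(s)| ≤ M for all s. Then the composition of the Erdélyi–Kober integral with the Riemann–Liouville integral satisfies |I_η^{μ,δ} (I^α f)(ξ)| ≤ M · ξ^α · Γ(α/η + μ + 1) / (Γ(α+1) · Γ(δ + α/η + μ + 1)). -/

import Mathlib

open MeasureTheory Set

/-- Riemann–Liouville fractional integral of order `α`. -/
noncomputable def RL (α : ℝ) (f : ℝ → ℝ) (t : ℝ) : ℝ :=
  (1 / Real.Gamma α) * ∫ s in (0:ℝ)..t, (t - s) ^ (α - 1) * f s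

/-- Erdélyi–Kober fractional integral of order `δ` with parameters `η`, `μ`. -/
noncomputable def EK (η μ δ : ℝ) (y : ℝ → ℝ) (t : ℝ) : ℝ :=
  (η * t ^ (-η * (δ + μ)) / Real.Gamma δ) *
    ∫ s in (0:ℝ)..t, s ^ (η * μ + η - 1) * y s / (t ^ η - s ^ η) ^ (1 - δ)

/-!
Bounding `|f|` by `M` gives `|I^α f (s)| ≤ M s^α / Γ(α+1)`, and the Erdélyi–Kober integral is
monotone with nonnegative kernel, so it remains to evaluate it on the power `s^α`. The substitution
`s = ξ u^(1/η)` turns that integral into the Beta integral `B(α/η + μ + 1, δ)`, whence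
`I_η^{μ,δ} s^α (ξ) = Γ(α/η + μ + 1) / Γ(δ + α/η + μ + 1) · ξ^α`.
-/

open intervalIntegral

section Beta

variable {a b : ℝ}

lemma intervalIntegrable_rpow_mul_one_sub_rpow (ha : 0 < a) (hb : 0 < b) :
    IntervalIntegrable (fun x : ℝ => x ^ (a - 1) * (1 - x) ^ (b - 1)) volume 0 1 := by
  have hleft :
      IntervalIntegrable (fun x : ℝ => x ^ (a - 1) * (1 - x) ^ (b - 1)) volume 0 (1 / 2) := by
    refine (intervalIntegrable_rpow' (by linarith)).mul_continuousOn ?_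
    refine (continuous_const.sub continuous_id).continuousOn.rpow_const fun x hx => Or.inl ?_
    rw [uIcc_of_le (by norm_num)] at hx
    change (1 : ℝ) - x ≠ 0
    linarith [hx.2]
  have hright :
      IntervalIntegrable (fun x : ℝ => x ^ (a - 1) * (1 - x) ^ (b - 1)) volume (1 / 2) 1 := by
    have h := (intervalIntegrable_rpow' (a := 1 / 2) (b := 0) (r := b - 1)
      (by linarith)).comp_sub_left 1
    norm_num at h
    refine h.continuousOn_mul (continuous_id.continuousOn.rpow_const fun x hx => Or.inl ?_)
    rw [uIcc_of_le (by norm_num)] at hx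
    exact (lt_of_lt_of_le (by norm_num) hx.1).ne'
  exact hleft.trans hright

lemma integral_rpow_mul_one_sub_rpow (ha : 0 < a) (hb : 0 < b) :
    ∫ x in (0 : ℝ)..1, x ^ (a - 1) * (1 - x) ^ (b - 1)
      = Real.Gamma a * Real.Gamma b / Real.Gamma (a + b) := by
  have hbeta :
      Complex.betaIntegral a b = ↑(∫ x in (0 : ℝ)..1, x ^ (a - 1) * (1 - x) ^ (b - 1)) := by
    rw [Complex.betaIntegral, ← integral_ofReal]
    refine integral_congr fun x hx => ?_
    rw [uIcc_of_le zero_le_one] at hx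
    rw [Complex.ofReal_mul, Complex.ofReal_cpow hx.1, Complex.ofReal_cpow (sub_nonneg.2 hx.2)]
    push_cast
    ring
  have hGamma := Complex.Gamma_mul_Gamma_eq_betaIntegral (s := a) (t := b)
    (by simpa using ha) (by simpa using hb)
  rw [hbeta, ← Complex.ofReal_add, Complex.Gamma_ofReal, Complex.Gamma_ofReal,
    Complex.Gamma_ofReal, ← Complex.ofReal_mul, ← Complex.ofReal_mul, Complex.ofReal_inj] at hGamma
  rw [hGamma, mul_div_cancel_left₀ _ (Real.Gamma_pos_of_pos (add_pos ha hb)).ne']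

end Beta

section Substitution

variable {ξ η : ℝ}

lemma image_mul_rpow_one_div_Ioo (hξ : 0 < ξ) (hη : 0 < η) :
    (fun u : ℝ => ξ * u ^ (1 / η)) '' Ioo 0 1 = Ioo 0 ξ := by
  ext s
  constructor
  · rintro ⟨u, hu, rfl⟩
    have hu1 : u ^ (1 / η) < 1 := Real.rpow_lt_one hu.1.le hu.2 (by positivity)
    exact ⟨mul_pos hξ (Real.rpow_pos_of_pos hu.1 _), by nlinarith⟩
  · rintro ⟨hs0, hsξ⟩
    have hq : 0 < s / ξ := div_pos hs0 hξ
    refine ⟨(s / ξ) ^ η,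
      ⟨Real.rpow_pos_of_pos hq _, Real.rpow_lt_one hq.le ((div_lt_one hξ).2 hsξ) hη⟩, ?_⟩
    simp only
    rw [← Real.rpow_mul hq.le, mul_one_div_cancel hη.ne', Real.rpow_one,
      mul_div_cancel₀ _ hξ.ne']

lemma injOn_mul_rpow_one_div (hξ : ξ ≠ 0) (hη : η ≠ 0) :
    InjOn (fun u : ℝ => ξ * u ^ (1 / η)) (Ioo 0 1) := fun _ hx _ hy h =>
  Real.rpow_left_injOn (one_div_ne_zero hη) hx.1.le hy.1.le (mul_left_cancel₀ hξ h)

lemma hasDerivWithinAt_mul_rpow_one_div {u : ℝ} (hu : 0 < u) (s : Set ℝ) :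
    HasDerivWithinAt (fun u : ℝ => ξ * u ^ (1 / η)) (ξ * (1 / η * u ^ (1 / η - 1))) s u :=
  ((Real.hasDerivAt_rpow_const (Or.inl hu.ne')).const_mul ξ).hasDerivWithinAt

lemma abs_deriv_smul_rpow_mul_sub_rpow (hξ : 0 < ξ) (hη : 0 < η) (β δ : ℝ) {x : ℝ}
    (hx : x ∈ Ioo (0 : ℝ) 1) :
    |ξ * (1 / η * x ^ (1 / η - 1))| •
        ((ξ * x ^ (1 / η)) ^ (β - 1) * (ξ ^ η - (ξ * x ^ (1 / η)) ^ η) ^ (δ - 1))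
      = ξ ^ (β + η * δ - η) / η * (x ^ (β / η - 1) * (1 - x) ^ (δ - 1)) := by
  obtain ⟨hx0, hx1⟩ := hx
  have hpow : (ξ * x ^ (1 / η)) ^ η = ξ ^ η * x := by
    rw [Real.mul_rpow hξ.le (Real.rpow_nonneg hx0.le _), ← Real.rpow_mul hx0.le,
      one_div_mul_cancel hη.ne', Real.rpow_one]
  have hbase : (ξ * x ^ (1 / η)) ^ (β - 1) = ξ ^ (β - 1) * x ^ ((β - 1) / η) := by
    rw [Real.mul_rpow hξ.le (Real.rpow_nonneg hx0.le _), ← Real.rpow_mul hx0.le]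
    ring_nf
  have hkernel :
      (ξ ^ η - ξ ^ η * x) ^ (δ - 1) = ξ ^ (η * (δ - 1)) * (1 - x) ^ (δ - 1) := by
    rw [← mul_one_sub, Real.mul_rpow (Real.rpow_nonneg hξ.le _) (by linarith),
      ← Real.rpow_mul hξ.le]
  have hx_pow : x ^ (β / η - 1) = x ^ (1 / η - 1) * x ^ ((β - 1) / η) := by
    rw [← Real.rpow_add hx0]
    ring_nf
  have hξ_pow : ξ ^ (β + η * δ - η) = ξ * (ξ ^ (β - 1) * ξ ^ (η * (δ - 1))) := by
    rw [show β + η * δ - η = 1 + ((β - 1) + η * (δ - 1)) by ring, Real.rpow_add hξ,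
      Real.rpow_one, Real.rpow_add hξ]
  rw [hpow, hbase, hkernel, hx_pow, hξ_pow, smul_eq_mul,
    abs_of_pos (by positivity : 0 < ξ * (1 / η * x ^ (1 / η - 1)))]
  ring

lemma integrableOn_rpow_mul_sub_rpow_rpow (hξ : 0 < ξ) (hη : 0 < η) {β δ : ℝ} (hβ : 0 < β)
    (hδ : 0 < δ) :
    IntegrableOn (fun s : ℝ => s ^ (β - 1) * (ξ ^ η - s ^ η) ^ (δ - 1)) (Ioo 0 ξ) := by
  rw [← image_mul_rpow_one_div_Ioo hξ hη, integrableOn_image_iff_integrableOn_abs_deriv_smul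
    measurableSet_Ioo (fun _ hx => hasDerivWithinAt_mul_rpow_one_div hx.1 _)
    (injOn_mul_rpow_one_div hξ.ne' hη.ne')]
  refine IntegrableOn.congr_fun ?_
    (fun x hx => (abs_deriv_smul_rpow_mul_sub_rpow hξ hη β δ hx).symm) measurableSet_Ioo
  exact ((intervalIntegrable_rpow_mul_one_sub_rpow (by positivity) hδ).1.mono_set
    Ioo_subset_Ioc_self).const_mul _

lemma integral_rpow_mul_sub_rpow_rpow (hξ : 0 < ξ) (hη : 0 < η) {β δ : ℝ} (hβ : 0 < β)
    (hδ : 0 < δ) :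
    ∫ s in Ioo 0 ξ, s ^ (β - 1) * (ξ ^ η - s ^ η) ^ (δ - 1)
      = ξ ^ (β + η * δ - η) / η
          * (Real.Gamma (β / η) * Real.Gamma δ / Real.Gamma (β / η + δ)) := by
  rw [← image_mul_rpow_one_div_Ioo hξ hη, integral_image_eq_integral_abs_deriv_smul
    measurableSet_Ioo (fun _ hx => hasDerivWithinAt_mul_rpow_one_div hx.1 _)
    (injOn_mul_rpow_one_div hξ.ne' hη.ne'),
    setIntegral_congr_fun measurableSet_Ioo
      (fun x hx => abs_deriv_smul_rpow_mul_sub_rpow hξ hη β δ hx),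
    MeasureTheory.integral_const_mul, ← integral_Ioc_eq_integral_Ioo,
    ← integral_of_le zero_le_one,
    integral_rpow_mul_one_sub_rpow (by positivity) hδ]

end Substitution

lemma abs_RL_le {α t M : ℝ} (hα : 0 < α) (ht : 0 ≤ t) {f : ℝ → ℝ}
    (hM : ∀ s ∈ Ioc 0 t, |f s| ≤ M) :
    |RL α f t| ≤ M / Real.Gamma (α + 1) * t ^ α := by
  have hkernel_int : IntervalIntegrable (fun s => (t - s) ^ (α - 1)) volume 0 t := by
    simpa using (intervalIntegrable_rpow' (a := t) (b := 0)
      (by linarith : (-1 : ℝ) < α - 1)).comp_sub_left t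
  have hkernel : ∫ s in (0 : ℝ)..t, (t - s) ^ (α - 1) = t ^ α / α := by
    rw [integral_comp_sub_left (fun x => x ^ (α - 1)), sub_self, sub_zero,
      integral_rpow (Or.inl (by linarith)), sub_add_cancel, Real.zero_rpow hα.ne', sub_zero]
  have hbound : ‖∫ s in (0 : ℝ)..t, (t - s) ^ (α - 1) * f s‖
      ≤ ∫ s in (0 : ℝ)..t, (t - s) ^ (α - 1) * M := by
    refine norm_integral_le_of_norm_le ht (Filter.Eventually.of_forall fun s hs => ?_)
      (hkernel_int.mul_const M)
    have hts : 0 ≤ t - s := sub_nonneg.2 hs.2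
    rw [norm_mul, Real.norm_of_nonneg (Real.rpow_nonneg hts _), Real.norm_eq_abs]
    exact mul_le_mul_of_nonneg_left (hM s hs) (Real.rpow_nonneg hts _)
  rw [intervalIntegral.integral_mul_const, hkernel] at hbound
  rw [RL, abs_mul, abs_of_pos (one_div_pos.2 (Real.Gamma_pos_of_pos hα)),
    Real.Gamma_add_one hα.ne']
  calc 1 / Real.Gamma α * |∫ s in (0 : ℝ)..t, (t - s) ^ (α - 1) * f s|
      ≤ 1 / Real.Gamma α * (t ^ α / α * M) := by
        gcongr
        exact hbound
    _ = M / (α * Real.Gamma α) * t ^ α := by ring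

section ErdelyiKober

variable {η μ δ ξ : ℝ}

lemma EK_const_mul (c : ℝ) (y : ℝ → ℝ) (t : ℝ) :
    EK η μ δ (fun s => c * y s) t = c * EK η μ δ y t := by
  have hintegrand : (fun s => s ^ (η * μ + η - 1) * (c * y s) / (t ^ η - s ^ η) ^ (1 - δ))
      = fun s => c * (s ^ (η * μ + η - 1) * y s / (t ^ η - s ^ η) ^ (1 - δ)) := by
    funext s
    ring
  rw [EK, EK, hintegrand, intervalIntegral.integral_const_mul]
  ring

lemma abs_EK_le_EK_of_abs_le (hη : 0 ≤ η) (hδ : 0 < δ) (hξ : 0 ≤ ξ) {y g : ℝ → ℝ}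
    (hg : IntervalIntegrable (fun s => s ^ (η * μ + η - 1) * g s / (ξ ^ η - s ^ η) ^ (1 - δ))
      volume 0 ξ)
    (hyg : ∀ s ∈ Ioc 0 ξ, |y s| ≤ g s) :
    |EK η μ δ y ξ| ≤ EK η μ δ g ξ := by
  have hΓ := Real.Gamma_pos_of_pos hδ
  have hprefactor : 0 ≤ η * ξ ^ (-η * (δ + μ)) / Real.Gamma δ := by positivity
  rw [EK, EK, abs_mul, abs_of_nonneg hprefactor, ← Real.norm_eq_abs]
  refine mul_le_mul_of_nonneg_left ?_ hprefactor
  refine norm_integral_le_of_norm_le hξ (Filter.Eventually.of_forall fun s hs => ?_) hg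
  have hpow : 0 ≤ s ^ (η * μ + η - 1) := Real.rpow_nonneg hs.1.le _
  have hkernel : 0 ≤ (ξ ^ η - s ^ η) ^ (1 - δ) :=
    Real.rpow_nonneg (sub_nonneg.2 (Real.rpow_le_rpow hs.1.le hs.2 hη)) _
  rw [Real.norm_eq_abs, abs_div, abs_mul, abs_of_nonneg hpow, abs_of_nonneg hkernel]
  gcongr
  exact hyg s hs

lemma EK_integrand_rpow_eq (hη : 0 < η) (α : ℝ) {s : ℝ} (hs : s ∈ Ioc 0 ξ) :
    s ^ (η * μ + η - 1) * s ^ α / (ξ ^ η - s ^ η) ^ (1 - δ)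
      = s ^ (η * (μ + α / η + 1) - 1) * (ξ ^ η - s ^ η) ^ (δ - 1) := by
  have hkernel : 0 ≤ ξ ^ η - s ^ η := sub_nonneg.2 (Real.rpow_le_rpow hs.1.le hs.2 hη.le)
  rw [← Real.rpow_add hs.1, div_eq_mul_inv, ← Real.rpow_neg hkernel, neg_sub,
    show η * (μ + α / η + 1) - 1 = η * μ + η - 1 + α by field_simp; ring]

lemma intervalIntegrable_EK_integrand_rpow (hη : 0 < η) (hδ : 0 < δ) (hξ : 0 < ξ) {α : ℝ}
    (hα : 0 < μ + α / η + 1) :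
    IntervalIntegrable (fun s => s ^ (η * μ + η - 1) * s ^ α / (ξ ^ η - s ^ η) ^ (1 - δ))
      volume 0 ξ := by
  rw [intervalIntegrable_iff_integrableOn_Ioo_of_le hξ.le]
  exact (integrableOn_rpow_mul_sub_rpow_rpow hξ hη (mul_pos hη hα) hδ).congr_fun
    (fun s hs => (EK_integrand_rpow_eq hη α (Ioo_subset_Ioc_self hs)).symm) measurableSet_Ioo

lemma EK_rpow (hη : 0 < η) (hδ : 0 < δ) (hξ : 0 < ξ) {α : ℝ} (hα : 0 < μ + α / η + 1) :
    EK η μ δ (fun s => s ^ α) ξ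
      = Real.Gamma (α / η + μ + 1) / Real.Gamma (δ + α / η + μ + 1) * ξ ^ α := by
  have hintegral :
      ∫ s in (0 : ℝ)..ξ, s ^ (η * μ + η - 1) * s ^ α / (ξ ^ η - s ^ η) ^ (1 - δ)
      = ∫ s in Ioo 0 ξ, s ^ (η * (μ + α / η + 1) - 1) * (ξ ^ η - s ^ η) ^ (δ - 1) := by
    rw [integral_of_le hξ.le, integral_Ioc_eq_integral_Ioo]
    exact setIntegral_congr_fun measurableSet_Ioo
      (fun s hs => EK_integrand_rpow_eq hη α (Ioo_subset_Ioc_self hs))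
  have hratio : η * (μ + α / η + 1) / η = α / η + μ + 1 := by field_simp; ring
  have hexp : ξ ^ (-η * (δ + μ)) * ξ ^ (η * (μ + α / η + 1) + η * δ - η) = ξ ^ α := by
    rw [← Real.rpow_add hξ]
    congr 1
    field_simp
    ring
  have hΓδ := (Real.Gamma_pos_of_pos hδ).ne'
  rw [EK, hintegral, integral_rpow_mul_sub_rpow_rpow hξ hη (mul_pos hη hα) hδ, hratio,
    show α / η + μ + 1 + δ = δ + α / η + μ + 1 by ring, ← hexp]
  field_simp

end ErdelyiKober

theorem erdelyi_kober_comp_riemann_liouville_bound_general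
    (δ η μ α ξ M : ℝ) (hδ : 0 < δ) (hη : 0 < η) (hμ : 0 < μ + α / η + 1)
    (hα : 0 < α) (hξ : 0 < ξ) (f : ℝ → ℝ)
    (hM : ∀ s ∈ Set.Icc (0:ℝ) ξ, |f s| ≤ M) :
    |EK η μ δ (RL α f) ξ| ≤
      M * ξ ^ α * Real.Gamma (α / η + μ + 1) /
        (Real.Gamma (α + 1) * Real.Gamma (δ + α / η + μ + 1)) := by
  have hRL : ∀ s ∈ Ioc 0 ξ, |RL α f s| ≤ M / Real.Gamma (α + 1) * s ^ α := fun s hs =>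
    abs_RL_le hα hs.1.le fun r hr => hM r ⟨hr.1.le, hr.2.trans hs.2⟩
  have hbound_int := (intervalIntegrable_EK_integrand_rpow hη hδ hξ hμ).const_mul
    (M / Real.Gamma (α + 1))
  calc |EK η μ δ (RL α f) ξ|
      ≤ EK η μ δ (fun s => M / Real.Gamma (α + 1) * s ^ α) ξ := by
        refine abs_EK_le_EK_of_abs_le hη.le hδ hξ.le ?_ hRL
        convert hbound_int using 2 with s
        ring
    _ = M / Real.Gamma (α + 1)
          * (Real.Gamma (α / η + μ + 1) / Real.Gamma (δ + α / η + μ + 1) * ξ ^ α) := by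
        rw [EK_const_mul, EK_rpow hη hδ hξ hμ]
    _ = M * ξ ^ α * Real.Gamma (α / η + μ + 1) /
          (Real.Gamma (α + 1) * Real.Gamma (δ + α / η + μ + 1)) := by ring

theorem erdelyi_kober_comp_riemann_liouville_bound
    (δ η μ α ξ M : ℝ) (hδ : 0 < δ) (hη : 0 < η) (hμ : 0 < μ + α / η + 1)
    (hα : 0 < α) (hξ : 0 < ξ) (f : ℝ → ℝ) (hf : ContinuousOn f (Set.Icc 0 ξ))
    (hM : ∀ s ∈ Set.Icc (0:ℝ) ξ, |f s| ≤ M) :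
    |EK η μ δ (RL α f) ξ| ≤
      M * ξ ^ α * Real.Gamma (α / η + μ + 1) /
        (Real.Gamma (α + 1) * Real.Gamma (δ + α / η + μ + 1)) :=
  erdelyi_kober_comp_riemann_liouville_bound_general δ η μ α ξ M hδ hη hμ hα hξ f hM
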